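/- Let $m,n$ be positive integers with $n > m \ge 6$ and $mn$ odd. Then $r(K_{1,m-1}, T_n^1) = m+n-5$, where $T_n^1$ is the tree defined below. -/

import Mathlib

open SimpleGraph

/-- `Contains G H` : the graph `G` contains a copy of `H` as a subgraph. -/
def Contains {V W : Type*} (G : SimpleGraph V) (H : SimpleGraph W) : Prop :=
  ∃ f : W ↪ V, ∀ a b, H.Adj a b → G.Adj (f a) (f b)

/-- The Ramsey number `r(G₁,G₂)`: the smallest positive `p` such that every graph on `p`
vertices contains a copy of `G₁` or its complement contains a copy of `G₂`. -/
noncomputable def ramseyNumber {α β : Type*} (G₁ : SimpleGraph α) (G₂ : SimpleGraph β) : ℕ :=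
  sInf {p | 0 < p ∧ ∀ G : SimpleGraph (Fin p), Contains G G₁ ∨ Contains Gᶜ G₂}

/-- The Turán/extremal number `ex(p; L)`: maximal number of edges of a graph on `p`
vertices with no copy of `L`. -/
noncomputable def exNum {W : Type*} (p : ℕ) (L : SimpleGraph W) : ℕ :=
  sSup {m | ∃ G : SimpleGraph (Fin p), ¬ Contains G L ∧ G.edgeSet.ncard = m}

/-- The maximum degree of a graph. -/
noncomputable def maxDeg {α : Type*} (G : SimpleGraph α) : ℕ :=
  sSup {d | ∃ v, d = (G.neighborSet v).ncard}

/-- The star `K_{1,m-1}` on `m` vertices, centered at `0`. -/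
def starGraph (m : ℕ) : SimpleGraph (Fin m) :=
  SimpleGraph.fromRel (fun i _ => (i : ℕ) = 0)

/-- The double star `S(n₁,n₂)`: vertex `0` is adjacent to `1` and to the `n₁` vertices
`2,…,n₁+1`; vertex `1` is adjacent to the `n₂` vertices `n₁+2,…,n₁+n₂+1`. -/
def doubleStar (n₁ n₂ : ℕ) : SimpleGraph (Fin (n₁ + n₂ + 2)) :=
  SimpleGraph.fromRel (fun i j =>
    ((i : ℕ) = 0 ∧ (j : ℕ) = 1) ∨
    ((i : ℕ) = 0 ∧ 2 ≤ (j : ℕ) ∧ (j : ℕ) ≤ n₁ + 1) ∨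
    ((i : ℕ) = 1 ∧ n₁ + 2 ≤ (j : ℕ)))

/-- The tree `Tₙ''` with edges `v₀vᵢ (1 ≤ i ≤ n-4)`, `v₁v_{n-3}`, `v₁v_{n-2}`, `v₂v_{n-1}`. -/
def treeDD (n : ℕ) : SimpleGraph (Fin n) :=
  SimpleGraph.fromRel (fun i j =>
    ((i : ℕ) = 0 ∧ 1 ≤ (j : ℕ) ∧ (j : ℕ) ≤ n - 4) ∨
    ((i : ℕ) = 1 ∧ ((j : ℕ) = n - 3 ∨ (j : ℕ) = n - 2)) ∨
    ((i : ℕ) = 2 ∧ (j : ℕ) = n - 1))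

/-- The tree `Tₙ'''` with edges `v₀vᵢ (1 ≤ i ≤ n-4)`, `v₁v_{n-3}`, `v₂v_{n-2}`, `v₃v_{n-1}`. -/
def treeDDD (n : ℕ) : SimpleGraph (Fin n) :=
  SimpleGraph.fromRel (fun i j =>
    ((i : ℕ) = 0 ∧ 1 ≤ (j : ℕ) ∧ (j : ℕ) ≤ n - 4) ∨
    ((i : ℕ) = 1 ∧ (j : ℕ) = n - 3) ∨
    ((i : ℕ) = 2 ∧ (j : ℕ) = n - 2) ∨
    ((i : ℕ) = 3 ∧ (j : ℕ) = n - 1))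

/-- The tree `Tₙ¹` with edges `v₀vᵢ (1 ≤ i ≤ n-3)`, `v_{n-4}v_{n-2}`, `v_{n-3}v_{n-1}`. -/
def treeT1 (n : ℕ) : SimpleGraph (Fin n) :=
  SimpleGraph.fromRel (fun i j =>
    ((i : ℕ) = 0 ∧ 1 ≤ (j : ℕ) ∧ (j : ℕ) ≤ n - 3) ∨
    ((i : ℕ) = n - 4 ∧ (j : ℕ) = n - 2) ∨
    ((i : ℕ) = n - 3 ∧ (j : ℕ) = n - 1))

/-- The tree `Tₙ²` with edges `v₀vᵢ (1 ≤ i ≤ n-3)`, `v_{n-3}v_{n-2}`, `v_{n-3}v_{n-1}`. -/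
def treeT2 (n : ℕ) : SimpleGraph (Fin n) :=
  SimpleGraph.fromRel (fun i j =>
    ((i : ℕ) = 0 ∧ 1 ≤ (j : ℕ) ∧ (j : ℕ) ≤ n - 3) ∨
    ((i : ℕ) = n - 3 ∧ ((j : ℕ) = n - 2 ∨ (j : ℕ) = n - 1)))

/-!
Upper bound. Let `G` be a graph on `m + n - 5` vertices without `K_{1,m-1}`, so all its degrees
are at most `m - 2`. Both `m + n - 5` and `m - 2` are odd, so by the handshake lemma `G` is not
`(m - 2)`-regular. Hence `Gᶜ` has minimum degree at least `n - 4` and a vertex `v` of degree at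
least `n - 3`. If `v` has degree at least `n - 1`, then `T_n^1` is embedded greedily with
centre `v`. Otherwise at least two vertices lie outside the closed neighbourhood of `v`, and since
`m + n - 5 ≤ 2n - 7` each of them has two neighbours in `N(v)`; they are the ends of the two
pendant paths of `T_n^1`.

Lower bound. The circulant graph on `ZMod (m + n - 6)` with jumps `±1, …, ±(m - 3)/2` is
`(m - 3)`-regular, so it contains no `K_{1,m-1}`, and its complement is `(n - 4)`-regular, whereas
`T_n^1` has a vertex of degree `n - 3`.
-/

open Finset

theorem Finset.exists_list_nodup_of_le_card {α : Type*} {s : Finset α} {k : ℕ} (h : k ≤ #s) :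
    ∃ L : List α, L.Nodup ∧ L.length = k ∧ ∀ u ∈ L, u ∈ s :=
  ⟨s.toList.take k, (nodup_toList s).sublist (List.take_sublist _ _),
    by simpa using h, fun _ hu => by simpa using List.mem_of_mem_take hu⟩

section Containment

variable {U V W : Type*} {G : SimpleGraph V}

theorem contains_iff_isContained {H : SimpleGraph W} : Contains G H ↔ H ⊑ G := by
  rw [isContained_iff_exists_le_comap]
  rfl

theorem Contains.of_embedding {G' : SimpleGraph U} {H : SimpleGraph W} (φ : G' ↪g G)
    (h : Contains G' H) : Contains G H :=
  contains_iff_isContained.2 <| (contains_iff_isContained.1 h).trans φ.isContained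

theorem Contains.trans {H : SimpleGraph U} {K : SimpleGraph W} (h₁ : Contains G H)
    (h₂ : Contains H K) : Contains G K :=
  contains_iff_isContained.2 <|
    (contains_iff_isContained.1 h₂).trans (contains_iff_isContained.1 h₁)

theorem contains_fromRel_of_nodup {n : ℕ} {r : Fin n → Fin n → Prop} (l : List V)
    (hl : l.Nodup) (hlen : l.length = n)
    (h : ∀ i j, i ≠ j → r i j → G.Adj (l.get (i.cast hlen.symm)) (l.get (j.cast hlen.symm))) :
    Contains G (fromRel r) :=
  ⟨⟨fun i => l.get (i.cast hlen.symm), fun _ _ hij => by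
    simpa using List.nodup_iff_injective_get.1 hl hij⟩,
    fun i j ⟨hij, hr⟩ => hr.elim (h i j hij) fun hr => (h j i hij.symm hr).symm⟩

end Containment

section Ramsey

variable {α β : Type*} {G₁ : SimpleGraph α} {G₂ : SimpleGraph β} {p q : ℕ}

/-- The arrow relation `p → (G₁, G₂)` of Ramsey theory. -/
def Arrows (p : ℕ) (G₁ : SimpleGraph α) (G₂ : SimpleGraph β) : Prop :=
  ∀ G : SimpleGraph (Fin p), Contains G G₁ ∨ Contains Gᶜ G₂

theorem Arrows.mono (h : Arrows p G₁ G₂) (hpq : p ≤ q) : Arrows q G₁ G₂ := fun G =>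
  let φ := Embedding.comap (Fin.castLEEmb hpq) G
  (h _).imp (·.of_embedding φ) (·.of_embedding (Embedding.complEquiv φ))

theorem not_arrows_card {V : Type*} [Fintype V] (G : SimpleGraph V) (h₁ : ¬Contains G G₁)
    (h₂ : ¬Contains Gᶜ G₂) : ¬Arrows (Fintype.card V) G₁ G₂ := fun h =>
  let φ := (Iso.map (Fintype.equivFin V) G).symm.toEmbedding
  (h _).elim (h₁ <| ·.of_embedding φ) (h₂ <| ·.of_embedding (Embedding.complEquiv φ))

theorem ramseyNumber_eq (hp : 0 < p) (hup : Arrows p G₁ G₂) (hlow : ¬Arrows (p - 1) G₁ G₂) :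
    ramseyNumber G₁ G₂ = p :=
  le_antisymm (Nat.sInf_le ⟨hp, hup⟩) <| le_csInf ⟨p, hp, hup⟩ fun r ⟨_, hr⟩ => by
    by_contra! hrp
    exact hlow (Arrows.mono hr (by omega))

end Ramsey

section Star

variable {V : Type*} [Fintype V] {G : SimpleGraph V} [DecidableRel G.Adj]

theorem starGraph_eq_starGraph_zero {m : ℕ} [NeZero m] :
    _root_.starGraph m = SimpleGraph.starGraph 0 := by
  ext i j
  simp only [_root_.starGraph, SimpleGraph.starGraph, fromRel_adj, Fin.ext_iff, Fin.val_zero]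

theorem contains_starGraph_iff {m : ℕ} (hm : 0 < m) :
    Contains G (_root_.starGraph m) ↔ ∃ v, m - 1 ≤ G.degree v := by
  classical
  have : NeZero m := ⟨hm.ne'⟩
  constructor
  · rw [starGraph_eq_starGraph_zero, contains_iff_isContained]
    rintro ⟨f⟩
    have hdeg := f.degree_le 0
    rw [degree_starGraph_center, Fintype.card_fin] at hdeg
    exact ⟨f 0, hdeg⟩
  · rintro ⟨v, hv⟩
    obtain ⟨L, hL, hlen, hadj⟩ := exists_list_nodup_of_le_card hv
    simp only [mem_neighborFinset] at hadj
    refine contains_fromRel_of_nodup (v :: L)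
      (List.nodup_cons.2 ⟨fun h => G.irrefl (hadj v h), hL⟩) (by rw [List.length_cons]; omega) ?_
    rintro ⟨_ | i, hi⟩ ⟨_ | j, hj⟩ hij h <;> simp_all

end Star

theorem treeT1_contains_starGraph (n : ℕ) : Contains (treeT1 n) (_root_.starGraph (n - 2)) :=
  ⟨Fin.castLEEmb (by omega), fun i j h => by
    simp only [_root_.starGraph, treeT1, fromRel_adj, ne_eq, Fin.ext_iff,
      Fin.coe_castLEEmb, Fin.val_castLE] at h ⊢
    omega⟩

section TreeT1

variable {V : Type*} {G : SimpleGraph V}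

theorem contains_treeT1_of_list {v a b x y : V} {L : List V}
    (hl : (v :: (L ++ [a, b] ++ [x, y])).Nodup) (hL : ∀ u ∈ L ++ [a, b], G.Adj v u)
    (hax : G.Adj a x) (hby : G.Adj b y) : Contains G (treeT1 (L.length + 5)) := by
  refine contains_fromRel_of_nodup _ hl (by simp) ?_
  rintro ⟨i, hi⟩ ⟨j, hj⟩ _ (⟨rfl, hj₁, hj₂⟩ | ⟨rfl, rfl⟩ | ⟨rfl, rfl⟩)
  · obtain ⟨j, rfl⟩ := Nat.exists_eq_add_of_le' hj₁
    simp only at hj₂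
    simp only [List.get_eq_getElem, Fin.val_cast, List.getElem_cons_zero,
      List.getElem_cons_succ]
    have hjL : j < (L ++ [a, b]).length := by
      simp only [List.length_append, List.length_cons, List.length_nil]
      omega
    rw [List.getElem_append_left hjL]
    exact hL _ (List.getElem_mem _)
  · simpa [List.getElem_append] using hax
  · simpa [List.getElem_append] using hby

variable [Fintype V] [DecidableEq V] [DecidableRel G.Adj]

theorem contains_treeT1_of_config {n : ℕ} (hn : 5 ≤ n) {v a b x y : V}
    (ha : a ∈ G.neighborFinset v \ {x, y}) (hb : b ∈ G.neighborFinset v \ {x, y}) (hab : a ≠ b)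
    (hax : G.Adj a x) (hby : G.Adj b y) (hxy : x ≠ y) (hxv : x ≠ v) (hyv : y ≠ v)
    (hcard : n - 3 ≤ #(G.neighborFinset v \ {x, y})) : Contains G (treeT1 n) := by
  obtain ⟨k, rfl⟩ := Nat.exists_eq_add_of_le' hn
  have hS : k ≤ #((G.neighborFinset v \ {x, y}) \ {a, b}) := by
    rw [card_sdiff_of_subset (by simp [insert_subset_iff, ha, hb]), card_pair hab]
    omega
  obtain ⟨L, hL, rfl, hLS⟩ := exists_list_nodup_of_le_card hS
  simp only [mem_sdiff, mem_neighborFinset, mem_insert, mem_singleton, not_or] at ha hb hLS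
  refine contains_treeT1_of_list (v := v) ?_ ?_ hax hby
  · have hvL : v ∉ L := fun h => G.irrefl (hLS v h).1.1
    simp only [List.nodup_cons, List.nodup_append, List.mem_append, List.mem_cons,
      List.not_mem_nil, hL]
    grind [G.ne_of_adj ha.1, G.ne_of_adj hb.1, G.ne_of_adj hax, G.ne_of_adj hby]
  · simp only [List.mem_append, List.mem_cons, List.not_mem_nil]
    grind

theorem contains_treeT1_of_le_degree {n : ℕ} (hn : 8 ≤ n) (hmin : ∀ u, n - 4 ≤ G.degree u)
    {v : V} (hv : n - 1 ≤ G.degree v) : Contains G (treeT1 n) := by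
  obtain ⟨a, ha⟩ : (G.neighborFinset v).Nonempty := by
    rw [← card_pos, card_neighborFinset_eq_degree]
    omega
  obtain ⟨x, hx, hxv⟩ := exists_mem_notMem_of_card_lt_card (s := {v})
      (t := G.neighborFinset a) <| by
    rw [card_singleton, card_neighborFinset_eq_degree]
    have := hmin a
    omega
  obtain ⟨b, hb, hbax⟩ := exists_mem_notMem_of_card_lt_card (s := {a, x})
      (t := G.neighborFinset v) <| by
    rw [card_neighborFinset_eq_degree]
    have := card_le_two (a := a) (b := x)
    omega
  obtain ⟨y, hy, hyvax⟩ := exists_mem_notMem_of_card_lt_card (s := {v, a, x})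
      (t := G.neighborFinset b) <| by
    rw [card_neighborFinset_eq_degree]
    have := card_le_three (a := v) (b := a) (c := x)
    have := hmin b
    omega
  simp only [mem_neighborFinset, mem_insert, mem_singleton, not_or] at ha hx hxv hb hbax hy hyvax
  refine contains_treeT1_of_config (v := v) (by omega) ?_ ?_ (Ne.symm hbax.1) hx hy
    (Ne.symm hyvax.2.2) hxv hyvax.1 ?_
  · simp [ha, G.ne_of_adj hx, Ne.symm hyvax.2.1]
  · simp [hb, hbax.2, G.ne_of_adj hy]
  · have h₁ := le_card_sdiff {x, y} (G.neighborFinset v)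
    have h₂ := card_le_two (a := x) (b := y)
    rw [card_neighborFinset_eq_degree] at h₁
    omega

theorem degree_add_degree_add_two_le {u v : V} (huv : u ≠ v) (hadj : ¬G.Adj u v) :
    G.degree u + G.degree v + 2 ≤
      Fintype.card V + #(G.neighborFinset u ∩ G.neighborFinset v) := by
  have hsub : G.neighborFinset u ∪ G.neighborFinset v ⊆ univ \ {u, v} := by
    intro w
    simp only [mem_union, mem_neighborFinset, mem_sdiff, mem_univ, mem_insert, mem_singleton,
      true_and, not_or]
    grind [G.ne_of_adj, G.adj_symm]
  have h₁ := card_sdiff_add_card_eq_card (subset_univ {u, v})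
  rw [card_pair huv, card_univ] at h₁
  have h₂ := card_union_add_card_inter (G.neighborFinset u) (G.neighborFinset v)
  rw [card_neighborFinset_eq_degree, card_neighborFinset_eq_degree] at h₂
  have := card_le_card hsub
  omega

theorem contains_treeT1_of_card_le {n : ℕ} (hV : n + 1 ≤ Fintype.card V)
    (hV' : Fintype.card V ≤ 2 * n - 7) (hmin : ∀ u, n - 4 ≤ G.degree u) {v : V}
    (hv : n - 3 ≤ G.degree v) (hv' : G.degree v ≤ n - 2) : Contains G (treeT1 n) := by
  set O := univ \ insert v (G.neighborFinset v)
  have hmemO : ∀ {u}, u ∈ O ↔ u ≠ v ∧ ¬G.Adj v u := by simp [O]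
  have hO : 1 < #O := by
    rw [card_sdiff_of_subset (subset_univ _), card_insert_of_notMem (by simp), card_univ,
      card_neighborFinset_eq_degree]
    omega
  have hcommon : ∀ u ∈ O, 1 < #(G.neighborFinset u ∩ G.neighborFinset v) := fun u hu => by
    have := degree_add_degree_add_two_le (hmemO.1 hu).1 fun h => (hmemO.1 hu).2 h.symm
    have := hmin u
    omega
  obtain ⟨x, hx, y, hy, hxy⟩ := one_lt_card.1 hO
  obtain ⟨a, ha⟩ := card_pos.1 (zero_lt_one.trans (hcommon x hx))
  obtain ⟨b, hb, hba⟩ := exists_mem_notMem_of_card_lt_card (s := {a})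
    (t := G.neighborFinset y ∩ G.neighborFinset v) (by simpa using hcommon y hy)
  rw [hmemO] at hx hy
  simp only [mem_inter, mem_neighborFinset, mem_singleton] at ha hb hba
  refine contains_treeT1_of_config (v := v) (by omega) ?_ ?_ (Ne.symm hba) ha.1.symm hb.1.symm
    hxy hx.1 hy.1 ?_
  · simp only [mem_sdiff, mem_neighborFinset, mem_insert, mem_singleton, not_or]
    exact ⟨ha.2, (G.ne_of_adj ha.1).symm, fun h => hy.2 (h ▸ ha.2)⟩
  · simp only [mem_sdiff, mem_neighborFinset, mem_insert, mem_singleton, not_or]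
    exact ⟨hb.2, fun h => hx.2 (h ▸ hb.2), (G.ne_of_adj hb.1).symm⟩
  · rw [sdiff_eq_self_of_disjoint (by simp [hx.2, hy.2]), card_neighborFinset_eq_degree]
    exact hv

theorem contains_treeT1_of_minDegree {n : ℕ} (hV : n + 1 ≤ Fintype.card V)
    (hV' : Fintype.card V ≤ 2 * n - 7) (hmin : ∀ u, n - 4 ≤ G.degree u) {v : V}
    (hv : n - 3 ≤ G.degree v) : Contains G (treeT1 n) := by
  rcases le_or_gt (n - 1) (G.degree v) with h | h
  · exact contains_treeT1_of_le_degree (by omega) hmin h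
  · exact contains_treeT1_of_card_le hV hV' hmin hv (by omega)

end TreeT1

theorem exists_degree_ne_of_odd {V : Type*} [Fintype V] (G : SimpleGraph V) [DecidableRel G.Adj]
    (hV : Odd (Fintype.card V)) {d : ℕ} (hd : Odd d) : ∃ v, G.degree v ≠ d := by
  by_contra! h
  have := G.even_card_odd_degree_vertices
  simp only [h, hd, filter_true, card_univ] at this
  exact Nat.not_even_iff_odd.2 hV this

theorem arrows_starGraph_treeT1 {m n : ℕ} (hm : 6 ≤ m) (hmn : m + 2 ≤ n) (hm' : Odd m)
    (hn' : Odd n) : Arrows (m + n - 5) (_root_.starGraph m) (treeT1 n) := by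
  classical
  intro G
  refine or_iff_not_imp_left.2 fun hG => ?_
  have hdeg : ∀ v, G.degree v ≤ m - 2 := fun v => by
    have := not_exists.1 (mt (contains_starGraph_iff (by omega)).2 hG) v
    omega
  obtain ⟨s, rfl⟩ := hm'
  obtain ⟨t, rfl⟩ := hn'
  obtain ⟨v, hv⟩ := exists_degree_ne_of_odd G (d := 2 * s - 1)
    (by rw [Fintype.card_fin]; exact ⟨s + t - 2, by omega⟩) ⟨s - 1, by omega⟩
  refine contains_treeT1_of_minDegree (v := v) (by rw [Fintype.card_fin]; omega)
    (by rw [Fintype.card_fin]; omega) (fun u => ?_) ?_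
  · rw [degree_compl, Fintype.card_fin]
    have := hdeg u
    omega
  · rw [degree_compl, Fintype.card_fin]
    have := hdeg v
    omega

theorem degree_circulantGraph {A : Type*} [AddCommGroup A] [Fintype A] [DecidableEq A]
    {s : Finset A} (hs : ∀ a ∈ s, -a ∈ s) (h0 : (0 : A) ∉ s) (v : A) :
    (circulantGraph (s : Set A)).degree v = #s := by
  have : (circulantGraph (s : Set A)).neighborFinset v = s.image (v + ·) := by
    ext w
    simp only [mem_neighborFinset, circulantGraph_adj, mem_coe, mem_image]
    constructor
    · rintro ⟨-, h | h⟩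
      · exact ⟨-(v - w), hs _ h, by abel⟩
      · exact ⟨w - v, h, by abel⟩
    · rintro ⟨a, ha, rfl⟩
      refine ⟨fun h => h0 ?_, Or.inr (by simpa using ha)⟩
      obtain rfl : a = 0 := by simpa using h
      exact ha
  rw [← card_neighborFinset_eq_degree, this, card_image_of_injective _ (add_right_injective v)]

theorem ZMod.intCast_injOn_Icc {q k : ℕ} (h : 2 * k < q) :
    Set.InjOn (Int.cast : ℤ → ZMod q) (Icc (-k : ℤ) k) := by
  intro i hi j hj hij
  simp only [coe_Icc, Set.mem_Icc] at hi hj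
  have := Int.eq_zero_of_abs_lt_dvd ((ZMod.intCast_eq_intCast_iff_dvd_sub i j q).1 hij)
    (by rw [abs_lt]; omega)
  omega

noncomputable def ZMod.smallResidues (q k : ℕ) : Finset (ZMod q) :=
  ((Icc (-k : ℤ) k).erase 0).image Int.cast

theorem degree_circulantGraph_smallResidues {q k : ℕ} [NeZero q] (h : 2 * k < q) (v : ZMod q) :
    (circulantGraph (ZMod.smallResidues q k : Set (ZMod q))).degree v = 2 * k := by
  have hinj := ZMod.intCast_injOn_Icc h
  rw [degree_circulantGraph]
  · rw [ZMod.smallResidues, card_image_of_injOn (hinj.mono (coe_subset.2 (erase_subset 0 _))),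
      card_erase_of_mem (by simp), Int.card_Icc]
    omega
  · simp only [ZMod.smallResidues, mem_image, mem_erase, mem_Icc]
    rintro _ ⟨i, ⟨hi0, hi⟩, rfl⟩
    exact ⟨-i, ⟨neg_ne_zero.2 hi0, by omega⟩, by push_cast; rfl⟩
  · simp only [ZMod.smallResidues, mem_image, mem_erase, mem_Icc, not_exists, not_and]
    intro i ⟨hi0, hi⟩ h
    exact hi0 (hinj (by simp only [coe_Icc, Set.mem_Icc]; omega) (by simp) (by simpa using h))

theorem not_arrows_starGraph_treeT1 {m n : ℕ} (hm : 3 ≤ m) (hn : 5 ≤ n) (hm' : Odd m) :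
    ¬Arrows (m + n - 6) (_root_.starGraph m) (treeT1 n) := by
  classical
  obtain ⟨k, rfl⟩ : ∃ k, m = 2 * k + 3 := by obtain ⟨k, rfl⟩ := hm'; exact ⟨k - 1, by omega⟩
  set q := 2 * k + 3 + n - 6
  have : NeZero q := ⟨by omega⟩
  have hdeg := degree_circulantGraph_smallResidues (q := q) (k := k) (by omega)
  refine ZMod.card q ▸ not_arrows_card (circulantGraph (ZMod.smallResidues q k : Set _)) ?_ ?_
  · rw [contains_starGraph_iff (by omega)]
    rintro ⟨v, hv⟩
    rw [hdeg] at hv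
    omega
  · intro h
    obtain ⟨v, hv⟩ :=
      (contains_starGraph_iff (by omega)).1 (h.trans (treeT1_contains_starGraph n))
    rw [degree_compl, hdeg, ZMod.card] at hv
    omega

theorem stmt13 (m n : ℕ) (hm : 6 ≤ m) (hmn : m < n) (ho : Odd (m * n)) :
    ramseyNumber (_root_.starGraph m) (treeT1 n) = m + n - 5 := by
  obtain ⟨hm', hn'⟩ := Nat.odd_mul.1 ho
  have hmn' : m + 2 ≤ n := by
    obtain ⟨s, rfl⟩ := hm'
    obtain ⟨t, rfl⟩ := hn'
    omega
  refine ramseyNumber_eq (by omega) (arrows_starGraph_treeT1 hm hmn' hm' hn') ?_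
  rw [Nat.sub_sub]
  exact not_arrows_starGraph_treeT1 (by omega) (by omega) hm'
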